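/- Let r ≥ 2, s = (s_1, …, s_r) ∈ ℕ^r, j = (j_1, …, j_r) ∈ J_s, and m ≥ r − 1. Then BC_{q^m − 1}^{s,j} = BC_{q^m − 1}^{(s_1),(j_1)} · Σ_{α=1}^{m−(r−2)} (1/Π(q^{m−α} − 1)) · BC_{q^{m−α} − 1}^{(s_2,…,s_r),(j_2,…,j_r)}. -/

import Mathlib

open Polynomial PowerSeries

noncomputable section

namespace Carlitz

variable (F : Type) [Field F] [Fintype F]

/-- `q`, the cardinality of the finite field of constants `𝔽_q`. -/
def q : ℕ := Fintype.card F

/-- The Carlitz polynomial `D_i = ∏_{j=0}^{i-1} (θ^{q^i} - θ^{q^j})` (with `D_0 = 1`). -/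
def Dpoly (i : ℕ) : Polynomial F :=
  ∏ j ∈ Finset.range i, (Polynomial.X ^ (q F) ^ i - Polynomial.X ^ (q F) ^ j)

/-- The Carlitz polynomial `L_i = ∏_{j=1}^{i} (θ - θ^{q^j})` (with `L_0 = 1`). -/
def Lpoly (i : ℕ) : Polynomial F :=
  ∏ j ∈ Finset.range i, (Polynomial.X - Polynomial.X ^ (q F) ^ (j + 1))

/-- The Carlitz factorial `Π(n) = ∏_i D_i^{n_i}` where `n = Σ_i n_i q^i` is the base-`q`
expansion of `n`.  This also equals the Carlitz gamma `Γ_{n+1}`. -/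
def cfact (n : ℕ) : Polynomial F :=
  ∏ i ∈ Finset.range (Nat.digits (q F) n).length,
    (Dpoly F i) ^ ((Nat.digits (q F) n).getD i 0)

/-- The inclusion `A = 𝔽_q[θ] → k = 𝔽_q(θ)`. -/
def toK : Polynomial F →+* RatFunc F := algebraMap _ _

/-- The Carlitz exponential `e_C(z) = Σ_{i≥0} z^{q^i}/D_i` as a power series over `k`. -/
def eC : PowerSeries (RatFunc F) :=
  PowerSeries.mk fun n => ∑ i ∈ Finset.range (n + 1),
    if (q F) ^ i = n then (toK F (Dpoly F i))⁻¹ else 0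

/-- The Bernoulli-Carlitz numbers `BC_n`, defined by `Σ_n BC_n z^n/Π(n) = z/e_C(z)`:
since `e_C(z) = z · u(z)` where `u(z) = Σ_m (coeff_{m+1} e_C) z^m` has constant term `1`,
we have `z/e_C(z) = u(z)⁻¹` and `BC_n = Π(n) · coeff_n (u⁻¹)`. -/
def BCnum (n : ℕ) : RatFunc F :=
  toK F (cfact F n) *
    PowerSeries.coeff n
      (PowerSeries.mk fun m => PowerSeries.coeff (m + 1) (eC F))⁻¹

/-- The Stirling-Carlitz numbers of the second kind `{n brace m}_C`, defined by
`Σ_n {n brace m}_C z^n/Π(n) = e_C(z)^m/Π(m)`, i.e. `{n brace m}_C = Π(n)·coeff_n(e_C^m)/Π(m)`. -/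
def StC (n m : ℕ) : RatFunc F :=
  toK F (cfact F n) * PowerSeries.coeff n (eC F ^ m) * (toK F (cfact F m))⁻¹

/-- The (finite) set of strictly decreasing tuples `i : Fin r → ℕ`,
`i_1 > i_2 > ⋯ > i_r ≥ 0`, with all values `< N`. -/
def decTuples (r N : ℕ) : Finset (Fin r → ℕ) :=
  (Finset.univ.filter fun i : Fin r → Fin N => ∀ a b : Fin r, a < b → i b < i a).image
    fun i l => (i l : ℕ)

/-- The leading (largest) entry `i_1` of a (strictly decreasing) tuple. -/
def lead {r : ℕ} (i : Fin r → ℕ) : ℕ := if h : 0 < r then i ⟨0, h⟩ else 0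

/-- The multi-poly-Bernoulli-Carlitz numbers `BC_n^{s,j}`, defined by the generating series
`Σ_n BC_n^{s,j} z^n/Π(n) = Li_s(e_C(z)·u_{1 j_1}, u_{2 j_2}, …, u_{r j_r})/e_C(z)
 = Σ_{i_1 > ⋯ > i_r ≥ 0} e_C(z)^{q^{i_1}-1} ∏_l u_{l j_l}^{q^{i_l}}/L_{i_l}^{s_l}`,
written out coefficientwise (here `u l` is the datum `u_{l j_l} ∈ A`; the coefficient of
`z^n` in `e_C^{q^{i_1}-1}` vanishes whenever `i_1 > n`, so the sum below is complete). -/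
def MPBC {r : ℕ} (s : Fin r → ℕ) (u : Fin r → Polynomial F) (n : ℕ) : RatFunc F :=
  toK F (cfact F n) * ∑ i ∈ decTuples r (n + 1),
    PowerSeries.coeff n (eC F ^ ((q F) ^ lead i - 1)) *
      ∏ l, (toK F (u l)) ^ ((q F) ^ (i l)) * ((toK F (Lpoly F (i l))) ^ (s l))⁻¹

/-- The two-variable rational function field `K₂ = 𝔽_q(θ)(t)`. -/
abbrev K2 := RatFunc (RatFunc F)

/-- The inclusion `k = 𝔽_q(θ) → 𝔽_q(θ)(t)`. -/
def liftK : RatFunc F →+* K2 F :=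
  (algebraMap (Polynomial (RatFunc F)) (K2 F)).comp Polynomial.C

/-- The inclusion `A = 𝔽_q[θ] → 𝔽_q(θ)(t)`. -/
def liftA : Polynomial F →+* K2 F := (liftK F).comp (toK F)

/-- The inclusion of constants `𝔽_q → 𝔽_q(θ)(t)`. -/
def liftF : F →+* K2 F := (liftA F).comp Polynomial.C

/-- Substitution `θ ↦ t` on a polynomial `P ∈ 𝔽_q[θ]`, landing in `𝔽_q(θ)(t)`
(where `t` is the outer variable `RatFunc.X`); e.g. `D_i|_{θ=t}`. -/
def subT (P : Polynomial F) : K2 F :=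
  Polynomial.eval (RatFunc.X : K2 F) (P.map (liftF F))

/-- Evaluation of a polynomial in `A[t]` in `𝔽_q(θ)(t)` (coefficients included via
`A → 𝔽_q(θ)`, the variable `t` sent to the outer `RatFunc.X`). -/
def evalAT (h : Polynomial (Polynomial F)) : K2 F :=
  Polynomial.eval (RatFunc.X : K2 F) (h.map (liftA F))

/-- The power series `1 - Σ_{i≥0} (∏_{j=1}^{i}(t^{q^i} - θ^{q^j})/D_i|_{θ=t}) x^{q^i}`
appearing in the definition of the Anderson-Thakur polynomials. -/
def ATgen : PowerSeries (K2 F) :=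
  1 - PowerSeries.mk fun m => ∑ i ∈ Finset.range (m + 1),
    if (q F) ^ i = m then
      (∏ j ∈ Finset.range i,
        ((RatFunc.X : K2 F) ^ (q F) ^ i - (liftK F RatFunc.X) ^ (q F) ^ (j + 1))) *
        (subT F (Dpoly F i))⁻¹
    else 0

/-- `H : ℕ → A[t]` is the family of Anderson-Thakur polynomials iff
`{1 - Σ_i (∏_{j=1}^{i}(t^{q^i} - θ^{q^j})/D_i|_{θ=t}) x^{q^i}}⁻¹ = Σ_n (H_n/Γ_{n+1}|_{θ=t}) x^n`,
i.e. the product of the left-hand factor with the right-hand series equals `1`. -/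
def IsATFamily (H : ℕ → Polynomial (Polynomial F)) : Prop :=
  ATgen F * (PowerSeries.mk fun n => evalAT F (H n) * (subT F (cfact F n))⁻¹) = 1

/-- Reduction of a rational function `x ∈ k` whose denominator is coprime to `℘`
into `A/℘A`: reduce numerator and denominator (in lowest terms) and divide. -/
def redmod (℘ : Polynomial F) (x : RatFunc F) : Polynomial F ⧸ Ideal.span {℘} :=
  Ideal.Quotient.mk (Ideal.span {℘}) x.num *
    Ring.inverse (Ideal.Quotient.mk (Ideal.span {℘}) x.denom)

/-- The finite multiple zeta value `ζ_{𝒜_k}(s)_℘ ∈ A/℘A`: the sum of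
`1/(a_1^{s_1} ⋯ a_r^{s_r})` over monic `a_1, …, a_r ∈ A` with
`deg ℘ > deg a_1 > ⋯ > deg a_r ≥ 0`. -/
def finMZV (℘ : Polynomial F) {r : ℕ} (s : Fin r → ℕ) : Polynomial F ⧸ Ideal.span {℘} :=
  ∑ᶠ a ∈ {a : Fin r → Polynomial F |
      (∀ l, (a l).Monic) ∧ (StrictAnti fun l => (a l).natDegree) ∧
        ∀ l, (a l).natDegree < ℘.natDegree},
    ∏ l, Ring.inverse (Ideal.Quotient.mk (Ideal.span {℘}) (a l) ^ (s l))

/-- The finite Carlitz multiple polylogarithm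
`Li_{𝒜_k,s}(u_1, …, u_r)_℘ = Σ_{deg ℘ > i_1 > ⋯ > i_r ≥ 0} u_1^{q^{i_1}} ⋯ u_r^{q^{i_r}}
/ (L_{i_1}^{s_1} ⋯ L_{i_r}^{s_r}) ∈ A/℘A`. -/
def finCMPL (℘ : Polynomial F) {r : ℕ} (s : Fin r → ℕ) (u : Fin r → Polynomial F) :
    Polynomial F ⧸ Ideal.span {℘} :=
  ∑ i ∈ decTuples r ℘.natDegree,
    ∏ l, Ideal.Quotient.mk (Ideal.span {℘}) (u l) ^ ((q F) ^ (i l)) *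
      Ring.inverse (Ideal.Quotient.mk (Ideal.span {℘}) (Lpoly F (i l)) ^ (s l))

/-!
At `n = q^M - 1` only the summands of `BC_n^{s,j}` with `i_1 = M` survive, because the
coefficient of `z^{q^M - 1}` in `e_C(z)^{q^v - 1}` is `δ_{vM}`. To see this, truncate `e_C` to a
polynomial `X + g(X^q)`. Frobenius turns its `q`-th power into `X^q + g'(X^{q^2})`, and induction
on `v` then shows that among the exponents `≡ -1 (mod q^v)`, `X^{q^v - 1}` is the only monomial
of its `(q^v - 1)`-st power. Hence both sides equal `Π(q^m - 1) u_1^{q^m} / L_m^{s_1}` times the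
sum of the depth `r - 1` terms over `m > i_2 > ⋯ > i_r`; the right-hand side groups these terms
by `α = m - i_2`.
-/

end Carlitz

namespace Polynomial

variable {R : Type*} [CommRing R]

theorem coeff_X_add_expand_pow_of_mod_eq {q k n : ℕ} (hk : k < q) (g : R[X]) (hn : n % q = k) :
    ((X + expand R q g) ^ k).coeff n = if n = k then 1 else 0 := by
  have hq : 0 < q := by omega
  rw [add_pow, finsetSum_coeff,
    Finset.sum_eq_single_of_mem k (Finset.self_mem_range_succ k)]
  · simp [coeff_X_pow]
  · intro j hj hjk
    have hjk : j < k := by rw [Finset.mem_range] at hj; omega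
    have hndvd : ¬ q ∣ n - j := by
      have hdiv := Nat.div_add_mod n q
      rw [show n - j = q * (n / q) + (k - j) by omega, Nat.dvd_add_right (dvd_mul_right _ _)]
      exact Nat.not_dvd_of_pos_of_lt (by omega) (by omega)
    rw [coeff_mul_natCast, ← map_pow, coeff_X_pow_mul', coeff_expand hq]
    simp [hndvd]

theorem coeff_mul_expand_of_mod_eq {q r n : ℕ} (hq : 0 < q) {A : R[X]} (B : R[X])
    (hA : ∀ a, a % q = r → A.coeff a = if a = r then 1 else 0) (hn : n % q = r) :
    (A * expand R q B).coeff n = B.coeff (n / q) := by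
  have hdiv := Nat.div_add_mod n q
  rw [coeff_mul, Finset.sum_eq_single_of_mem (r, q * (n / q))
    (by rw [Finset.HasAntidiagonal.mem_antidiagonal]; omega)]
  · rw [hA r (by rw [← hn, Nat.mod_mod]), if_pos rfl, one_mul, coeff_expand hq,
      if_pos (dvd_mul_right _ _), Nat.mul_div_cancel_left _ hq]
  · rintro ⟨a, b⟩ hab hne
    rw [Finset.HasAntidiagonal.mem_antidiagonal] at hab
    rw [coeff_expand hq]
    split_ifs with hb
    · obtain ⟨c, rfl⟩ := hb
      have ha : a % q = r := by rw [← hn, ← hab, Nat.add_mul_mod_self_left]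
      rw [hA a ha, if_neg (fun har => hne (Prod.ext har (by simp only; omega))), zero_mul]
    · rw [mul_zero]

theorem X_add_expand_pow_expChar_pow {p : ℕ} [ExpChar R p] (e : ℕ) (g : R[X]) :
    (X + expand R (p ^ e) g) ^ p ^ e =
      expand R (p ^ e) (X + expand R (p ^ e) (g.map (iterateFrobenius R p e))) := by
  rw [← map_iterateFrobenius_expand p, Polynomial.map_expand, Polynomial.map_add, map_X,
    Polynomial.map_expand]

theorem coeff_X_add_expand_pow_pow_sub_one {p e : ℕ} [ExpChar R p] (hq : 1 < p ^ e) (i : ℕ)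
    (g : R[X]) {n : ℕ} (hn : (p ^ e) ^ i ∣ n + 1) :
    ((X + expand R (p ^ e) g) ^ ((p ^ e) ^ i - 1)).coeff n =
      if n + 1 = (p ^ e) ^ i then 1 else 0 := by
  induction i generalizing g n with
  | zero => simp [coeff_one]
  | succ i ih =>
    obtain ⟨hmod, hsucc⟩ : n % p ^ e = p ^ e - 1 ∧ n + 1 = p ^ e * (n / p ^ e + 1) := by
      have hdvd : p ^ e ∣ n % p ^ e + 1 := by
        rw [← Nat.dvd_add_right (dvd_mul_right _ (n / p ^ e)), ← add_assoc, Nat.div_add_mod]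
        exact dvd_trans (dvd_pow_self _ i.succ_ne_zero) hn
      have := Nat.le_of_dvd (Nat.succ_pos _) hdvd
      have := Nat.mod_lt n (show 0 < p ^ e by omega)
      have := Nat.div_add_mod n (p ^ e)
      rw [Nat.mul_add, mul_one]
      omega
    have hexp : (p ^ e) ^ (i + 1) - 1 = (p ^ e - 1) + p ^ e * ((p ^ e) ^ i - 1) := by
      have := Nat.one_le_pow i (p ^ e) (by omega)
      rw [Nat.mul_sub, mul_one, ← pow_succ']
      have : p ^ e ≤ (p ^ e) ^ (i + 1) := Nat.le_self_pow (n := i + 1) (by omega) _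
      omega
    rw [hexp, pow_add, pow_mul, X_add_expand_pow_expChar_pow, ← map_pow,
      coeff_mul_expand_of_mod_eq (by omega) _
        (fun a ha => coeff_X_add_expand_pow_of_mod_eq (by omega) g ha) hmod,
      ih _ (by rwa [hsucc, pow_succ', Nat.mul_dvd_mul_iff_left (by omega)] at hn)]
    simp only [hsucc, pow_succ', Nat.mul_left_cancel_iff (show 0 < p ^ e by omega)]

end Polynomial

theorem PowerSeries.coeff_pow_eq_coeff_trunc_pow {R : Type*} [CommSemiring R] (f : R⟦X⟧)
    {n N : ℕ} (hn : n < N) (k : ℕ) :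
    PowerSeries.coeff n (f ^ k) = ((PowerSeries.trunc N f) ^ k).coeff n := by
  have h := congrArg (fun P => P.coeff n) (PowerSeries.trunc_trunc_pow f N k)
  simp only [PowerSeries.coeff_trunc, if_pos hn, ← Polynomial.coe_pow,
    Polynomial.coeff_coe] at h
  exact h.symm

theorem Fin.strictAnti_cons {α : Type*} [Preorder α] {n : ℕ} {f : Fin n → α} {a : α} :
    StrictAnti (Fin.cons a f : Fin (n + 1) → α) ↔ (∀ j, f j < a) ∧ StrictAnti f :=
  Fin.strictMono_cons (α := αᵒᵈ)

namespace Carlitz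

variable (F : Type) [Field F] [Fintype F]

theorem one_lt_q : 1 < q F := Fintype.one_lt_card

theorem lt_q_pow (a : ℕ) : a < q F ^ a := Nat.lt_pow_self (one_lt_q F)

theorem Dpoly_ne_zero (i : ℕ) : Dpoly F i ≠ 0 :=
  Finset.prod_ne_zero_iff.2 fun j hj => sub_ne_zero.2 fun h => by
    have := Nat.pow_right_injective (one_lt_q F) (by simpa using congrArg natDegree h)
    exact (Finset.mem_range.1 hj).ne' this

theorem toK_cfact_ne_zero (n : ℕ) : toK F (cfact F n) ≠ 0 :=
  (map_ne_zero_iff _ (RatFunc.algebraMap_injective F)).2 <|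
    Finset.prod_ne_zero_iff.2 fun i _ => pow_ne_zero _ (Dpoly_ne_zero F i)

def eCTrunc (M : ℕ) : Polynomial (RatFunc F) :=
  ∑ a ∈ Finset.range M, Polynomial.C (toK F (Dpoly F a))⁻¹ * Polynomial.X ^ q F ^ a

theorem trunc_eC (M : ℕ) : PowerSeries.trunc (q F ^ M) (eC F) = eCTrunc F M := by
  ext n
  simp only [PowerSeries.coeff_trunc, eCTrunc, Polynomial.finsetSum_coeff,
    Polynomial.coeff_C_mul_X_pow]
  split_ifs with hn
  · rw [eC, PowerSeries.coeff_mk, ← Finset.sum_filter, ← Finset.sum_filter]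
    congr 1
    ext a
    simp only [Finset.mem_filter, Finset.mem_range]
    constructor
    · rintro ⟨-, rfl⟩
      exact ⟨(Nat.pow_lt_pow_iff_right (one_lt_q F)).1 hn, rfl⟩
    · rintro ⟨-, rfl⟩
      exact ⟨Nat.lt_succ_of_lt (lt_q_pow F a), rfl⟩
  · refine (Finset.sum_eq_zero fun a ha => if_neg ?_).symm
    rintro rfl
    exact hn (Nat.pow_lt_pow_right (one_lt_q F) (Finset.mem_range.1 ha))

theorem eCTrunc_succ (M : ℕ) :
    eCTrunc F (M + 1) = Polynomial.X + Polynomial.expand _ (q F)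
      (∑ a ∈ Finset.range M,
        Polynomial.C (toK F (Dpoly F (a + 1)))⁻¹ * Polynomial.X ^ q F ^ a) := by
  rw [eCTrunc, Finset.sum_range_succ', add_comm, map_sum]
  congr 1
  · simp [Dpoly]
  · refine Finset.sum_congr rfl fun a _ => ?_
    rw [map_mul, Polynomial.expand_C, map_pow, Polynomial.expand_X, ← pow_mul, ← pow_succ']

theorem X_dvd_eC : PowerSeries.X ∣ eC F := by
  rw [PowerSeries.X_dvd_iff, ← PowerSeries.coeff_zero_eq_constantCoeff_apply, eC,
    PowerSeries.coeff_mk]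
  simp

theorem coeff_eC_pow_q_pow_sub_one (M v : ℕ) :
    PowerSeries.coeff (q F ^ M - 1) (eC F ^ (q F ^ v - 1)) = if v = M then 1 else 0 := by
  have hq := one_lt_q F
  rcases le_or_gt v M with hvM | hMv
  · obtain ⟨e, hp, hcard⟩ := FiniteField.card F (ringChar F)
    have : Fact (ringChar F).Prime := ⟨hp⟩
    have hqe : q F = ringChar F ^ (e : ℕ) := hcard
    have hlt : q F ^ M - 1 < q F ^ (M + 1) :=
      lt_of_le_of_lt (Nat.sub_le _ _) (Nat.pow_lt_pow_right hq M.lt_succ_self)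
    rw [PowerSeries.coeff_pow_eq_coeff_trunc_pow _ hlt, trunc_eC, eCTrunc_succ, hqe,
      Polynomial.coeff_X_add_expand_pow_pow_sub_one (hqe ▸ hq) v _
        (by rw [Nat.sub_add_cancel (Nat.one_le_pow _ _ (hqe ▸ by omega))]
            exact pow_dvd_pow _ hvM),
      Nat.sub_add_cancel (Nat.one_le_pow _ _ (hqe ▸ by omega))]
    exact if_congr ((Nat.pow_right_injective (hqe ▸ hq)).eq_iff.trans eq_comm) rfl rfl
  · rw [PowerSeries.X_pow_dvd_iff.1 (pow_dvd_pow_of_dvd (X_dvd_eC F) _) _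
      (Nat.sub_lt_sub_right (Nat.one_le_pow _ _ (by omega)) (Nat.pow_lt_pow_right hq hMv)),
      if_neg hMv.ne']

theorem mem_decTuples {r N : ℕ} {i : Fin r → ℕ} :
    i ∈ decTuples r N ↔ StrictAnti i ∧ ∀ l, i l < N := by
  simp only [decTuples, Finset.mem_image, Finset.mem_filter, Finset.mem_univ, true_and]
  constructor
  · rintro ⟨i, hi, rfl⟩
    exact ⟨fun a b hab => hi a b hab, fun l => (i l).2⟩
  · rintro ⟨hanti, hlt⟩
    exact ⟨fun l => ⟨i l, hlt l⟩, fun a b hab => hanti hab, rfl⟩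

theorem decTuples_zero (N : ℕ) : decTuples 0 N = {![]} :=
  Finset.eq_singleton_iff_unique_mem.2
    ⟨mem_decTuples.2 ⟨fun a => a.elim0, fun l => l.elim0⟩,
      fun _ _ => Subsingleton.elim _ _⟩

theorem decTuples_eq_empty {r N : ℕ} (h : N < r) : decTuples r N = ∅ :=
  Finset.eq_empty_of_forall_notMem fun i hi => by
    obtain ⟨hanti, hlt⟩ := mem_decTuples.1 hi
    have := Fintype.card_le_of_injective (fun l => (⟨i l, hlt l⟩ : Fin N))
      fun a b hab => hanti.injective (congrArg Fin.val hab)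
    simp only [Fintype.card_fin] at this
    omega

theorem cons_mem_decTuples {r N L : ℕ} {i : Fin r → ℕ} :
    (Fin.cons L i : Fin (r + 1) → ℕ) ∈ decTuples (r + 1) N ↔
      L < N ∧ i ∈ decTuples r L := by
  simp only [mem_decTuples, Fin.strictAnti_cons, Fin.forall_fin_succ, Fin.cons_zero,
    Fin.cons_succ]
  constructor
  · rintro ⟨⟨hlt, hanti⟩, hL, -⟩
    exact ⟨hL, hanti, hlt⟩
  · rintro ⟨hL, hanti, hlt⟩
    exact ⟨⟨hlt, hanti⟩, hL, fun l => (hlt l).trans hL⟩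

theorem sum_decTuples_succ {M : Type*} [AddCommMonoid M] (r N : ℕ)
    (f : (Fin (r + 1) → ℕ) → M) :
    ∑ i ∈ decTuples (r + 1) N, f i =
      ∑ L ∈ Finset.range N, ∑ i ∈ decTuples r L, f (Fin.cons L i) := by
  rw [Finset.sum_sigma']
  refine Finset.sum_nbij' (fun i => ⟨i 0, Fin.tail i⟩) (fun x => Fin.cons x.1 x.2)
    (fun i hi => ?_) (fun x hx => ?_) (fun i _ => Fin.cons_self_tail i)
    (fun x _ => by simp) (fun i _ => by simp)
  · rw [← Fin.cons_self_tail i, cons_mem_decTuples] at hi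
    simpa using hi
  · rw [Finset.mem_sigma, Finset.mem_range] at hx
    exact cons_mem_decTuples.2 hx

theorem sum_range_eq_sum_Icc_sub {M : Type*} [AddCommMonoid M] {r : ℕ} (m : ℕ) (h : ℕ → M)
    (hh : ∀ L < r, h L = 0) :
    ∑ L ∈ Finset.range m, h L = ∑ α ∈ Finset.Icc 1 (m - r), h (m - α) := by
  rw [← Finset.sum_subset (s₁ := Finset.Ico r m) (fun L hL => by
    rw [Finset.mem_Ico] at hL; rw [Finset.mem_range]; omega) fun L hLm hL =>
    hh L (by rw [Finset.mem_range] at hLm; rw [Finset.mem_Ico] at hL; omega)]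
  refine (Finset.sum_nbij' (fun α => m - α) (fun L => m - L) ?_ ?_ ?_ ?_
    fun _ _ => rfl).symm <;>
    intro x hx <;> simp only [Finset.mem_Icc, Finset.mem_Ico] at hx ⊢ <;> omega

theorem lead_cons {r L : ℕ} (i : Fin r → ℕ) : lead (Fin.cons L i : Fin (r + 1) → ℕ) = L :=
  rfl

def polylogTerm {r : ℕ} (s : Fin r → ℕ) (u : Fin r → Polynomial F) (i : Fin r → ℕ) :
    RatFunc F :=
  ∏ l, toK F (u l) ^ q F ^ i l * (toK F (Lpoly F (i l)) ^ s l)⁻¹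

theorem polylogTerm_zero (s : Fin 0 → ℕ) (u : Fin 0 → Polynomial F) (i : Fin 0 → ℕ) :
    polylogTerm F s u i = 1 :=
  Fin.prod_univ_zero _

theorem polylogTerm_cons {r : ℕ} (s : Fin (r + 1) → ℕ) (u : Fin (r + 1) → Polynomial F)
    (L : ℕ) (i : Fin r → ℕ) :
    polylogTerm F s u (Fin.cons L i) =
      toK F (u 0) ^ q F ^ L * (toK F (Lpoly F L) ^ s 0)⁻¹ *
        polylogTerm F (Fin.tail s) (Fin.tail u) i := by
  simp only [polylogTerm, Fin.prod_univ_succ, Fin.cons_zero, Fin.cons_succ, Fin.tail]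

theorem MPBC_q_pow_sub_one {r : ℕ} (s : Fin (r + 1) → ℕ) (u : Fin (r + 1) → Polynomial F)
    (M : ℕ) :
    MPBC F s u (q F ^ M - 1) =
      toK F (cfact F (q F ^ M - 1)) *
        ∑ i ∈ decTuples r M, polylogTerm F s u (Fin.cons M i) := by
  rw [MPBC, Nat.sub_add_cancel (Nat.one_le_pow _ _ (by have := one_lt_q F; omega)),
    sum_decTuples_succ,
    Finset.sum_eq_single_of_mem M (Finset.mem_range.2 (lt_q_pow F M))]
  · simp only [lead_cons, coeff_eC_pow_q_pow_sub_one, ↓reduceIte, one_mul, polylogTerm]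
  · intro L _ hLM
    simp only [lead_cons, coeff_eC_pow_q_pow_sub_one, if_neg hLM, zero_mul,
      Finset.sum_const_zero]

theorem MPBC_qpow_recursion (r : ℕ) (hr : 2 ≤ r) (s : Fin r → ℕ)
    (u : Fin r → Polynomial F)
    (m : ℕ) :
    MPBC F s u ((q F) ^ m - 1) =
      MPBC F (fun _ : Fin 1 => s ⟨0, by omega⟩) (fun _ => u ⟨0, by omega⟩) ((q F) ^ m - 1) *
        ∑ α ∈ Finset.Icc 1 (m - (r - 2)),
          (toK F (cfact F ((q F) ^ (m - α) - 1)))⁻¹ *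
            MPBC F (fun l : Fin (r - 1) => s ⟨l.1 + 1, by have := l.2; omega⟩)
              (fun l : Fin (r - 1) => u ⟨l.1 + 1, by have := l.2; omega⟩)
              ((q F) ^ (m - α) - 1) := by
  obtain ⟨r, rfl⟩ : ∃ r', r = r' + 2 := ⟨r - 2, by omega⟩
  have htail (α : ℕ) : (toK F (cfact F (q F ^ (m - α) - 1)))⁻¹ *
      MPBC F (Fin.tail s) (Fin.tail u) (q F ^ (m - α) - 1) =
        ∑ i ∈ decTuples r (m - α),
          polylogTerm F (Fin.tail s) (Fin.tail u) (Fin.cons (m - α) i) := by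
    rw [MPBC_q_pow_sub_one, inv_mul_cancel_left₀ (toK_cfact_ne_zero F _)]
  change _ = _ * ∑ α ∈ Finset.Icc 1 (m - r), (toK F (cfact F (q F ^ (m - α) - 1)))⁻¹ *
      MPBC F (Fin.tail s) (Fin.tail u) (q F ^ (m - α) - 1)
  rw [Finset.sum_congr rfl fun α _ => htail α,
    ← sum_range_eq_sum_Icc_sub (r := r) m
      (fun L => ∑ i ∈ decTuples r L, polylogTerm F (Fin.tail s) (Fin.tail u) (Fin.cons L i))
      (fun L hL => by rw [decTuples_eq_empty hL, Finset.sum_empty]),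
    ← sum_decTuples_succ, MPBC_q_pow_sub_one, MPBC_q_pow_sub_one, decTuples_zero,
    Finset.sum_singleton]
  simp only [polylogTerm_cons, polylogTerm_zero, Fin.mk_zero, mul_one, Finset.mul_sum,
    mul_assoc]

end Carlitz
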